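/- arXiv:1207.3946 — 8 statements merged into one kernel-verified Lean document; each statement's English description precedes it below -/
import Mathlib

section
/- Let p(r,u) = 1 + u(2u² - 5)r + 3r² - u r³ for 0 < r < 1 and -1 ≤ u ≤ 1. Then p(r,u) ≥ 0 for all u ∈ [-1,1] if and only if r ≤ r₀ := √((7√7 - 17)/2). -/
set_option maxHeartbeats 1000000 in
theorem stmt_2 (r : ℝ) (h0 : 0 < r) (h1 : r < 1) :
    (∀ u ∈ Set.Icc (-1 : ℝ) 1,
        0 ≤ 1 + u * (2 * u ^ 2 - 5) * r + 3 * r ^ 2 - u * r ^ 3) ↔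
      r ≤ Real.sqrt ((7 * Real.sqrt 7 - 17) / 2) := by
  have hs7 : Real.sqrt 7 ^ 2 = 7 := Real.sq_sqrt (by norm_num)
  have hs7gt : (2:ℝ) < Real.sqrt 7 := by nlinarith [Real.sqrt_nonneg 7]
  set t0 : ℝ := (7 * Real.sqrt 7 - 17) / 2 with ht0
  have ht0pos : 0 < t0 := by rw [ht0]; nlinarith [Real.sqrt_nonneg 7]
  have ht0eq : 2 * t0 ^ 2 + 34 * t0 - 27 = 0 := by rw [ht0]; nlinarith [hs7]
  have hr0 : Real.sqrt t0 ^ 2 = t0 := Real.sq_sqrt ht0pos.le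
  have hr0n : 0 ≤ Real.sqrt t0 := Real.sqrt_nonneg _
  have hsn : 0 ≤ Real.sqrt ((5 + r ^ 2) / 6) := Real.sqrt_nonneg _
  have hs2 : Real.sqrt ((5 + r ^ 2) / 6) ^ 2 = (5 + r ^ 2) / 6 :=
    Real.sq_sqrt (by positivity)
  set s : ℝ := Real.sqrt ((5 + r ^ 2) / 6) with hs
  have hs1 : s ≤ 1 := by nlinarith
  have hshalf : (1:ℝ)/2 < s := by nlinarith
  have hs3 : s ^ 3 = (5 + r ^ 2) / 6 * s := by
    rw [pow_succ, hs2]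
  have hsub : (s * (10 * r + 2 * r ^ 3)) ^ 2 = (5 + r ^ 2) / 6 * (10 * r + 2 * r ^ 3) ^ 2 := by
    rw [mul_pow, hs2]
  have hposS : 0 ≤ s * (10 * r + 2 * r ^ 3) := by positivity
  have hrlt : r ^ 2 < 1 := by nlinarith
  constructor
  · intro H
    have hm := H s ⟨by linarith, hs1⟩
    have hm2 : 0 ≤ 1 + 3 * r ^ 2 + 2 * r * s ^ 3 - 5 * r * s - s * r ^ 3 := by
      linarith [hm.trans_eq (by ring : 1 + s * (2 * s ^ 2 - 5) * r + 3 * r ^ 2 - s * r ^ 3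
        = 1 + 3 * r ^ 2 + 2 * r * s ^ 3 - 5 * r * s - s * r ^ 3)]
    rw [hs3] at hm2
    have hle : s * (10 * r + 2 * r ^ 3) ≤ 3 + 9 * r ^ 2 := by linarith
    have hsq : (s * (10 * r + 2 * r ^ 3)) ^ 2 ≤ (3 + 9 * r ^ 2) ^ 2 :=
      pow_le_pow_left₀ hposS hle 2
    rw [hsub] at hsq
    have hpoly : 2 * r ^ 2 * (5 + r ^ 2) ^ 3 ≤ 27 * (1 + 3 * r ^ 2) ^ 2 := by linarith [hsq]
    have hne : 0 < (r ^ 2 - 1) ^ 2 := by nlinarith [mul_pos (show (0:ℝ) < 1 - r ^ 2 by linarith) (show (0:ℝ) < 1 - r ^ 2 by linarith)]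
    have hfac : (r ^ 2 - 1) ^ 2 * (2 * (r ^ 2) ^ 2 + 34 * r ^ 2 - 27) ≤ 0 := by linarith [hpoly]
    have hquad : 2 * (r ^ 2) ^ 2 + 34 * r ^ 2 - 27 ≤ 0 := by
      by_contra hq
      push_neg at hq
      exact absurd hfac (not_le.mpr (mul_pos hne hq))
    have hfac2 : (r ^ 2 - t0) * (2 * r ^ 2 + 2 * t0 + 34) ≤ 0 := by linarith [hquad, ht0eq]
    have ht : r ^ 2 ≤ t0 := by
      by_contra hq
      push_neg at hq
      have : 0 < (r ^ 2 - t0) * (2 * r ^ 2 + 2 * t0 + 34) :=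
        mul_pos (by linarith) (by positivity)
      linarith
    calc r = Real.sqrt (r ^ 2) := (Real.sqrt_sq h0.le).symm
    _ ≤ Real.sqrt t0 := Real.sqrt_le_sqrt ht
  · intro hr u hu
    obtain ⟨hu1, hu2⟩ := hu
    have ht : r ^ 2 ≤ t0 := by
      have := pow_le_pow_left₀ h0.le hr 2
      rwa [hr0] at this
    have hquad : 2 * (r ^ 2) ^ 2 + 34 * r ^ 2 - 27 ≤ 0 := by
      nlinarith [ht, ht0eq, sq_nonneg r, ht0pos]
    have hfac : (r ^ 2 - 1) ^ 2 * (2 * (r ^ 2) ^ 2 + 34 * r ^ 2 - 27) ≤ 0 :=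
      mul_nonpos_of_nonneg_of_nonpos (sq_nonneg _) hquad
    have hpoly : 2 * r ^ 2 * (5 + r ^ 2) ^ 3 ≤ 27 * (1 + 3 * r ^ 2) ^ 2 := by linarith [hfac]
    have hsq : (s * (10 * r + 2 * r ^ 3)) ^ 2 ≤ (3 + 9 * r ^ 2) ^ 2 := by
      rw [hsub]; linarith [hpoly]
    have hle : s * (10 * r + 2 * r ^ 3) ≤ 3 + 9 * r ^ 2 := by
      nlinarith [hsq, hposS]
    have hid : 1 + u * (2 * u ^ 2 - 5) * r + 3 * r ^ 2 - u * r ^ 3 =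
        (3 + 9 * r ^ 2 - s * (10 * r + 2 * r ^ 3)) / 3 + 2 * r * (u - s) ^ 2 * (u + 2 * s)
        + (6 * r * u - 4 * r * s) * (s ^ 2 - (5 + r ^ 2) / 6) := by ring
    rw [hid, hs2]
    have h1' : 0 ≤ u + 2 * s := by linarith
    have h2' : 0 ≤ 2 * r * (u - s) ^ 2 * (u + 2 * s) :=
      mul_nonneg (mul_nonneg (by linarith) (sq_nonneg _)) h1'
    simp only [sub_self, mul_zero]
    linarith
end

section
/- For 0 < r < 1, the condition 1/9 · (9 - 5√6·r·√(5+r²) + 27r² - √6·r³·√(5+r²)) ≥ 0 holds if and only if r ≤ √((7√7 - 17)/2). -/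
theorem stmt_4 (r : ℝ) (h0 : 0 < r) (h1 : r < 1) :
    0 ≤ (1 / 9 : ℝ) * (9 - 5 * Real.sqrt 6 * r * Real.sqrt (5 + r ^ 2) + 27 * r ^ 2
        - Real.sqrt 6 * r ^ 3 * Real.sqrt (5 + r ^ 2)) ↔
      r ≤ Real.sqrt ((7 * Real.sqrt 7 - 17) / 2) := by
  set q := Real.sqrt 6 with hqdef
  set s := Real.sqrt (5 + r ^ 2) with hsdef
  set p := Real.sqrt 7 with hpdef
  have hq2 : q ^ 2 = 6 := Real.sq_sqrt (by norm_num)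
  have hs2 : s ^ 2 = 5 + r ^ 2 := Real.sq_sqrt (by positivity)
  have hp2 : p ^ 2 = 7 := Real.sq_sqrt (by norm_num)
  have hq0 : 0 < q := Real.sqrt_pos.2 (by norm_num)
  have hs0 : 0 < s := Real.sqrt_pos.2 (by positivity)
  have hp0 : 0 < p := Real.sqrt_pos.2 (by norm_num)
  have hBnn : (0:ℝ) ≤ q * r * s * (5 + r ^ 2) := by positivity
  have key : (q * r * s * (5 + r ^ 2)) ^ 2 = 6 * r ^ 2 * (5 + r ^ 2) ^ 3 := by
    linear_combination (s ^ 2 * r ^ 2 * (5 + r ^ 2) ^ 2) * hq2 +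
      (6 * r ^ 2 * (5 + r ^ 2) ^ 2) * hs2
  rw [Real.le_sqrt' h0]
  constructor
  · intro h
    have h' : q * r * s * (5 + r ^ 2) ≤ 9 + 27 * r ^ 2 := by nlinarith [h]
    have hB : 6 * r ^ 2 * (5 + r ^ 2) ^ 3 ≤ (9 + 27 * r ^ 2) ^ 2 := by
      calc 6 * r ^ 2 * (5 + r ^ 2) ^ 3 = (q * r * s * (5 + r ^ 2)) ^ 2 := key.symm
        _ ≤ (9 + 27 * r ^ 2) ^ 2 := by nlinarith [h', hBnn]
    have hpoly : (2 * r ^ 2 + 17) ^ 2 ≤ 343 := by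
      by_contra hc
      push_neg at hc
      have h3 : (0:ℝ) < 1 - r ^ 2 := by nlinarith
      nlinarith [hB, mul_pos (mul_pos h3 h3) (sub_pos.2 hc)]
    nlinarith [hpoly, hp2, hp0]
  · intro h
    have hpoly : (2 * r ^ 2 + 17) ^ 2 ≤ 343 := by nlinarith [h, hp2, hp0]
    have hB : 6 * r ^ 2 * (5 + r ^ 2) ^ 3 ≤ (9 + 27 * r ^ 2) ^ 2 := by
      nlinarith [mul_nonneg (sq_nonneg (r ^ 2 - 1)) (sub_nonneg.2 hpoly)]
    have hBA : q * r * s * (5 + r ^ 2) ≤ 9 + 27 * r ^ 2 := by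
      by_contra hc
      push_neg at hc
      have hprod : (0:ℝ) < (q * r * s * (5 + r ^ 2) - (9 + 27 * r ^ 2)) *
          (q * r * s * (5 + r ^ 2) + (9 + 27 * r ^ 2)) :=
        mul_pos (sub_pos.2 hc) (by positivity)
      nlinarith [key, hB, hprod]
    linarith [hBA]
end

section
/- Fix an integer n ≥ 2 and α ∈ [0,1). For 0 < r < 1/n^{1/(n-1)}, (1 - (n²(1-α)/(n+α)) r^{n-1}) / (1 + (n(1-α)/(n+α)) r^{n-1}) > α; moreover this fails for r close to 1 (specifically, the expression is ≤ α for r^{n-1} ≥ (n+α)/(n²(1-α) + αn(1-α)) when that bound is less than 1). -/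
theorem stmt_6 (n : ℕ) (hn : 2 ≤ n) (α : ℝ) (hα0 : 0 ≤ α) (hα1 : α < 1) :
    (∀ r : ℝ, 0 < r → r < (1 / (n : ℝ)) ^ ((1 : ℝ) / ((n : ℝ) - 1)) →
      α < (1 - ((n : ℝ) ^ 2 * (1 - α) / ((n : ℝ) + α)) * r ^ (n - 1)) /
          (1 + ((n : ℝ) * (1 - α) / ((n : ℝ) + α)) * r ^ (n - 1))) ∧
    (∀ r : ℝ, 0 < r → r < 1 →
      ((n : ℝ) + α) / ((n : ℝ) ^ 2 * (1 - α) + α * (n : ℝ) * (1 - α)) < 1 →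
      ((n : ℝ) + α) / ((n : ℝ) ^ 2 * (1 - α) + α * (n : ℝ) * (1 - α)) ≤ r ^ (n - 1) →
      (1 - ((n : ℝ) ^ 2 * (1 - α) / ((n : ℝ) + α)) * r ^ (n - 1)) /
          (1 + ((n : ℝ) * (1 - α) / ((n : ℝ) + α)) * r ^ (n - 1)) ≤ α) := by
  have hn2 : (2 : ℝ) ≤ (n : ℝ) := by exact_mod_cast hn
  have hna : (0 : ℝ) < (n : ℝ) + α := by linarith
  have h1α : (0 : ℝ) < 1 - α := by linarith
  constructor
  · intro r hr0 hr
    set t : ℝ := r ^ (n - 1) with htdef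
    have ht0 : 0 < t := pow_pos hr0 _
    have htlt : t < 1 / (n : ℝ) := by
      have hcn : (0:ℝ) ≤ (1 / (n : ℝ)) ^ ((1 : ℝ) / ((n : ℝ) - 1)) :=
        Real.rpow_nonneg (by positivity) _
      have h2 : t < ((1 / (n : ℝ)) ^ ((1 : ℝ) / ((n : ℝ) - 1))) ^ (n - 1) :=
        pow_lt_pow_left₀ hr hr0.le (by omega)
      have h3 : ((1 / (n : ℝ)) ^ ((1 : ℝ) / ((n : ℝ) - 1))) ^ (n - 1) = 1 / (n : ℝ) := by
        rw [← Real.rpow_natCast ((1 / (n : ℝ)) ^ ((1 : ℝ) / ((n : ℝ) - 1))) (n - 1),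
          ← Real.rpow_mul (by positivity)]
        have hcast : ((n - 1 : ℕ) : ℝ) = (n : ℝ) - 1 := by
          have : (1 : ℕ) ≤ n := by omega
          push_cast [Nat.cast_sub this]; ring
        rw [hcast, one_div ((n:ℝ)-1), inv_mul_cancel₀ (by linarith), Real.rpow_one]
      rwa [h3] at h2
    have hnt : (n : ℝ) * t < 1 := by
      rw [lt_div_iff₀ (by linarith)] at htlt
      linarith [htlt]
    have hD : 0 < 1 + ((n : ℝ) * (1 - α) / ((n : ℝ) + α)) * t := by positivity
    rw [lt_div_iff₀ hD]
    have key : (n : ℝ) * (1 - α) * t < 1 - α := by nlinarith [mul_pos (mul_pos (show (0:ℝ)<(n:ℝ) by linarith) h1α) hna]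
    rw [show (1:ℝ) + (n : ℝ) * (1 - α) / ((n : ℝ) + α) * t
        = (((n:ℝ) + α) + (n : ℝ) * (1 - α) * t) / ((n : ℝ) + α) by field_simp,
      show (1:ℝ) - (n : ℝ)^2 * (1 - α) / ((n : ℝ) + α) * t
        = (((n:ℝ) + α) - (n : ℝ)^2 * (1 - α) * t) / ((n : ℝ) + α) by field_simp]
    rw [mul_div_assoc', div_lt_div_iff_of_pos_right hna]
    nlinarith
  · intro r hr0 hr1 hb1 hbt
    set t : ℝ := r ^ (n - 1) with htdef
    have ht0 : 0 < t := pow_pos hr0 _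
    have hden : (0:ℝ) < (n : ℝ) ^ 2 * (1 - α) + α * (n : ℝ) * (1 - α) := by nlinarith [mul_pos (mul_pos (show (0:ℝ)<(n:ℝ) by linarith) h1α) hna]
    have hkey : 1 - α ≤ (n : ℝ) * (1 - α) * t := by
      rw [div_le_iff₀ hden] at hbt
      nlinarith
    have hD : 0 < 1 + ((n : ℝ) * (1 - α) / ((n : ℝ) + α)) * t := by positivity
    rw [div_le_iff₀ hD]
    rw [show (1:ℝ) + (n : ℝ) * (1 - α) / ((n : ℝ) + α) * t
        = (((n:ℝ) + α) + (n : ℝ) * (1 - α) * t) / ((n : ℝ) + α) by field_simp,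
      show (1:ℝ) - (n : ℝ)^2 * (1 - α) / ((n : ℝ) + α) * t
        = (((n:ℝ) + α) - (n : ℝ)^2 * (1 - α) * t) / ((n : ℝ) + α) by field_simp,
      mul_div_assoc', div_le_div_iff_of_pos_right hna]
    nlinarith
end

section
/- Let 0 ≤ α < 1. The equation 2(1-α)(1-r)⁴ + α(1-r)² - (1+r)² = 0 has a unique root r_S(α) in (0,1), and r_S is a decreasing function of α on [0,1). In particular r_S(0) = 1 + 1/(2√2) - √(√2 + 1/8). -/
private lemma f_anti (α r1 r2 : ℝ) (hα0 : 0 ≤ α) (hα1 : α < 1)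
    (h1 : 0 ≤ r1) (h12 : r1 < r2) (h2 : r2 ≤ 1) :
    2 * (1 - α) * (1 - r2) ^ 4 + α * (1 - r2) ^ 2 - (1 + r2) ^ 2 <
    2 * (1 - α) * (1 - r1) ^ 4 + α * (1 - r1) ^ 2 - (1 + r1) ^ 2 := by
  have hu : (0:ℝ) ≤ 1 - r2 := by linarith
  have h4 : (1 - r2) ^ 4 ≤ (1 - r1) ^ 4 := pow_le_pow_left₀ hu (by linarith) 4
  have hsq : (1 - r2) ^ 2 ≤ (1 - r1) ^ 2 := pow_le_pow_left₀ hu (by linarith) 2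
  have t1 : 0 ≤ (1 - α) * ((1 - r1) ^ 4 - (1 - r2) ^ 4) :=
    mul_nonneg (by linarith) (by linarith)
  have t2 : 0 ≤ α * ((1 - r1) ^ 2 - (1 - r2) ^ 2) := mul_nonneg hα0 (by linarith)
  have t3 : (1 + r1) ^ 2 < (1 + r2) ^ 2 := by nlinarith
  nlinarith [t1, t2, t3]

private lemma root_small (α r : ℝ) (hα0 : 0 ≤ α) (hα1 : α < 1)
    (hr : r ∈ Set.Ioo (0:ℝ) 1)
    (heq : 2 * (1 - α) * (1 - r) ^ 4 + α * (1 - r) ^ 2 - (1 + r) ^ 2 = 0) :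
    1 / 2 < (1 - r) ^ 2 := by
  obtain ⟨hr0, hr1⟩ := hr
  by_contra h
  push_neg at h
  have hnn : (0:ℝ) ≤ (1 - r) ^ 2 := sq_nonneg _
  have h4 : (1 - r) ^ 4 ≤ (1 / 2) * (1 - r) ^ 2 := by nlinarith [sq_nonneg (1 - r)]
  nlinarith [mul_nonneg (by linarith : (0:ℝ) ≤ 1 - α) (by linarith : (0:ℝ) ≤ (1/2) * (1-r)^2 - (1-r)^4)]

theorem stmt_10 :
    (∀ α : ℝ, 0 ≤ α → α < 1 →
      ∃! r : ℝ, r ∈ Set.Ioo (0 : ℝ) 1 ∧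
        2 * (1 - α) * (1 - r) ^ 4 + α * (1 - r) ^ 2 - (1 + r) ^ 2 = 0) ∧
    (∀ α β rα rβ : ℝ, 0 ≤ α → α < β → β < 1 →
      rα ∈ Set.Ioo (0 : ℝ) 1 → rβ ∈ Set.Ioo (0 : ℝ) 1 →
      2 * (1 - α) * (1 - rα) ^ 4 + α * (1 - rα) ^ 2 - (1 + rα) ^ 2 = 0 →
      2 * (1 - β) * (1 - rβ) ^ 4 + β * (1 - rβ) ^ 2 - (1 + rβ) ^ 2 = 0 →
      rβ < rα) ∧
    (∀ r : ℝ, r ∈ Set.Ioo (0 : ℝ) 1 →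
      2 * (1 - (0 : ℝ)) * (1 - r) ^ 4 + (0 : ℝ) * (1 - r) ^ 2 - (1 + r) ^ 2 = 0 →
      r = 1 + 1 / (2 * Real.sqrt 2) - Real.sqrt (Real.sqrt 2 + 1 / 8)) := by
  refine ⟨?_, ?_, ?_⟩
  · -- existence and uniqueness
    intro α hα0 hα1
    set f : ℝ → ℝ := fun r => 2 * (1 - α) * (1 - r) ^ 4 + α * (1 - r) ^ 2 - (1 + r) ^ 2 with hf
    have hcont : ContinuousOn f (Set.Icc 0 1) := by
      apply Continuous.continuousOn; fun_prop
    have hf0 : f 0 = 1 - α := by simp [hf]; ring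
    have hf1 : f 1 = -4 := by simp [hf]; ring
    have hmem : (0:ℝ) ∈ Set.Ioo (f 1) (f 0) := by
      rw [hf0, hf1]; constructor <;> linarith
    obtain ⟨r, hrI, hr0⟩ := intermediate_value_Ioo' (by norm_num : (0:ℝ) ≤ 1) hcont hmem
    have hr0' : 2 * (1 - α) * (1 - r) ^ 4 + α * (1 - r) ^ 2 - (1 + r) ^ 2 = 0 := hr0
    refine ⟨r, ⟨hrI, hr0'⟩, ?_⟩
    rintro r' ⟨hr'I, hr'0⟩
    by_contra hne
    rcases lt_or_gt_of_ne hne with h | h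
    · have := f_anti α r' r hα0 hα1 (le_of_lt hr'I.1) h (le_of_lt hrI.2)
      linarith [hr0', hr'0, this]
    · have := f_anti α r r' hα0 hα1 (le_of_lt hrI.1) h (le_of_lt hr'I.2)
      linarith [hr0', hr'0, this]
  · -- monotone in α
    intro α β rα rβ hα0 hαβ hβ1 hrα hrβ heqα heqβ
    have hα1 : α < 1 := lt_trans hαβ hβ1
    have hβ0 : 0 ≤ β := le_trans hα0 (le_of_lt hαβ)
    have hsmall := root_small α rα hα0 hα1 hrα heqα
    -- F(rα, β) < 0
    have hneg : 2 * (1 - β) * (1 - rα) ^ 4 + β * (1 - rα) ^ 2 - (1 + rα) ^ 2 < 0 := by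
      nlinarith [mul_pos (by linarith : (0:ℝ) < β - α)
        (by nlinarith [sq_nonneg (1 - rα)] : (0:ℝ) < 2 * (1 - rα) ^ 4 - (1 - rα) ^ 2)]
    by_contra h
    push_neg at h
    rcases eq_or_lt_of_le h with heq | hlt
    · rw [← heq] at heqβ; linarith
    · have := f_anti β rα rβ hβ0 hβ1 (le_of_lt hrα.1) hlt (le_of_lt hrβ.2)
      linarith
  · -- α = 0 case
    intro r hr heq
    obtain ⟨hr0, hr1⟩ := hr
    set a := Real.sqrt 2 with ha
    have ha2 : a ^ 2 = 2 := Real.sq_sqrt (by norm_num)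
    have hapos : (0:ℝ) < a := Real.sqrt_pos.mpr (by norm_num)
    have halb : 1 < a := by nlinarith
    set b := Real.sqrt (Real.sqrt 2 + 1 / 8) with hb
    have hb2 : b ^ 2 = a + 1 / 8 := Real.sq_sqrt (by positivity)
    have hbpos : (0:ℝ) ≤ b := Real.sqrt_nonneg _
    -- from equation: 2(1-r)^4 = (1+r)^2, factor
    have hfac : (a * (1 - r) ^ 2 - (1 + r)) * (a * (1 - r) ^ 2 + (1 + r)) = 0 := by
      nlinarith [heq, ha2]
    have hpos2 : 0 < a * (1 - r) ^ 2 + (1 + r) := by positivity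
    have hkey : a * (1 - r) ^ 2 = 1 + r := by
      rcases mul_eq_zero.mp hfac with h | h
      · linarith
      · linarith
    set X := 1 + 1 / (2 * a) - r with hX
    have hXpos : 0 < X := by
      have : 0 < 1 / (2 * a) := by positivity
      simp only [hX]; linarith
    -- b^2 = X^2
    have hsq : b ^ 2 = X ^ 2 := by
      have hane : a ≠ 0 := ne_of_gt hapos
      field_simp [hX] at *
      nlinarith [hkey, ha2, hb2]
    have hfac2 : (b - X) * (b + X) = 0 := by nlinarith [hsq]
    have : b = X := by
      rcases mul_eq_zero.mp hfac2 with h | h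
      · linarith
      · linarith
    simp only [hX] at this
    linarith
end

section
/- Let 0 ≤ α < 1 and 0 < r < 1. If |aₙ| ≤ (2n+1)(n+1)/6 and |bₙ| ≤ (2n-1)(n-1)/6 for all n ≥ 2 (with b₁ = 0), and 2(1-α)(1-r)⁴ + α(1-r)² - (1+r)² ≥ 0, then ∑_{n≥2} ((n-α)/(1-α))|aₙ| r^{n-1} + ∑_{n≥2} ((n+α)/(1-α))|bₙ| r^{n-1} ≤ 1. -/
/-!
Inserting the Koebe bounds, the coefficient of `r ^ (m - 1)` in both series together is at most
`(4 / (1 - α)) * C(m + 1, 3) + m`, so the left-hand side is dominated by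
`r (4 / (1 - α) ∑ C(n + 3, 3) rⁿ + ∑ (n + 1) rⁿ + ∑ rⁿ)`, which equals
`r (4 / ((1 - α)(1 - r)⁴) + 1 / (1 - r)² + 1 / (1 - r))`. After clearing denominators, this
value is `≤ 1` exactly when `2(1 - α)(1 - r)⁴ + α(1 - r)² - (1 + r)² ≥ 0`.
-/

theorem tsum_add_tsum_le_of_hasSum {ι : Type*} {f g H : ι → ℝ} {S : ℝ}
    (hf : ∀ i, 0 ≤ f i) (hg : ∀ i, 0 ≤ g i) (hle : ∀ i, f i + g i ≤ H i) (hH : HasSum H S) :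
    ∑' i, f i + ∑' i, g i ≤ S := by
  have hfs : Summable f :=
    hH.summable.of_nonneg_of_le hf fun i => (le_add_of_nonneg_right (hg i)).trans (hle i)
  have hgs : Summable g :=
    hH.summable.of_nonneg_of_le hg fun i => (le_add_of_nonneg_left (hf i)).trans (hle i)
  rw [← hfs.tsum_add hgs]
  exact hasSum_le hle (hfs.add hgs).hasSum hH

theorem Nat.cast_add_three_choose_three (n : ℕ) :
    (((n + 3).choose 3 : ℕ) : ℝ) = ((n : ℝ) + 1) * ((n : ℝ) + 2) * ((n : ℝ) + 3) / 6 := by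
  rw [Nat.cast_choose ℝ (by omega : 3 ≤ n + 3), Nat.add_sub_cancel]
  simp only [Nat.factorial_succ, Nat.cast_mul, Nat.cast_add, Nat.cast_ofNat, Nat.cast_one]
  field_simp
  ring

noncomputable def koebeMajorant (α m : ℝ) : ℝ :=
  (m - α) / (1 - α) * ((2 * m + 1) * (m + 1) / 6)
    + (m + α) / (1 - α) * ((2 * m - 1) * (m - 1) / 6)

theorem koebeMajorant_eq {α : ℝ} (hα : α ≠ 1) (m : ℝ) :
    koebeMajorant α m = 4 / (1 - α) * ((m - 1) * m * (m + 1) / 6) + m := by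
  have : 1 - α ≠ 0 := sub_ne_zero.2 hα.symm
  unfold koebeMajorant
  field_simp
  ring

theorem hasSum_koebeMajorant {α r : ℝ} (hα : α ≠ 1) (hr : ‖r‖ < 1) :
    HasSum (fun n : ℕ => koebeMajorant α (n + 2) * r ^ (n + 1))
      (r * (4 / (1 - α) * (1 / (1 - r) ^ 4) + 1 / (1 - r) ^ 2 + 1 / (1 - r))) := by
  have h3 := hasSum_choose_mul_geometric_of_norm_lt_one 3 hr
  have h1 := hasSum_choose_mul_geometric_of_norm_lt_one 1 hr
  have h0 := hasSum_geometric_of_norm_lt_one hr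
  have hterm : (fun n : ℕ => koebeMajorant α (n + 2) * r ^ (n + 1)) = fun n : ℕ =>
      r * (4 / (1 - α) * (((n + 3).choose 3 : ℕ) * r ^ n) + ((n + 1).choose 1 : ℕ) * r ^ n
        + r ^ n) := by
    funext n
    rw [koebeMajorant_eq hα, Nat.cast_add_three_choose_three, Nat.choose_one_right]
    push_cast
    ring
  rw [hterm, one_div (1 - r)]
  exact (((h3.mul_left (4 / (1 - α))).add h1).add h0).mul_left r

theorem koebe_majorant_sum_le_one {α r : ℝ} (hα : α < 1) (hr : r < 1)
    (hpoly : 0 ≤ 2 * (1 - α) * (1 - r) ^ 4 + α * (1 - r) ^ 2 - (1 + r) ^ 2) :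
    r * (4 / (1 - α) * (1 / (1 - r) ^ 4) + 1 / (1 - r) ^ 2 + 1 / (1 - r)) ≤ 1 := by
  have hα' : 0 < 1 - α := by linarith
  have hr' : 0 < 1 - r := by linarith
  rw [show r * (4 / (1 - α) * (1 / (1 - r) ^ 4) + 1 / (1 - r) ^ 2 + 1 / (1 - r))
      = r * (4 + (1 - α) * (1 - r) ^ 2 + (1 - α) * (1 - r) ^ 3) / ((1 - α) * (1 - r) ^ 4) by
    field_simp, div_le_one (by positivity)]
  linear_combination hpoly

theorem stmt_11_general (α : ℝ) (hα0 : 0 ≤ α) (hα1 : α < 1) (r : ℝ) (h0 : 0 < r) (h1 : r < 1)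
    (a b : ℕ → ℂ)
    (ha : ∀ n : ℕ, 2 ≤ n → ‖a n‖ ≤ (2 * n + 1) * (n + 1) / 6)
    (hb : ∀ n : ℕ, 2 ≤ n → ‖b n‖ ≤ (2 * n - 1) * (n - 1) / 6)
    (hpoly : 0 ≤ 2 * (1 - α) * (1 - r) ^ 4 + α * (1 - r) ^ 2 - (1 + r) ^ 2) :
    (∑' n : ℕ, (((n + 2 : ℝ) - α) / (1 - α)) * ‖a (n + 2)‖ * r ^ (n + 1))
      + (∑' n : ℕ, (((n + 2 : ℝ) + α) / (1 - α)) * ‖b (n + 2)‖ * r ^ (n + 1)) ≤ 1 := by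
  have hβ : 0 < 1 - α := by linarith
  have hr : ‖r‖ < 1 := by rwa [Real.norm_of_nonneg h0.le]
  have hca (n : ℕ) : 0 ≤ ((n + 2 : ℝ) - α) / (1 - α) :=
    div_nonneg (by linarith [n.cast_nonneg (α := ℝ)]) hβ.le
  refine (tsum_add_tsum_le_of_hasSum
    (fun n => mul_nonneg (mul_nonneg (hca n) (norm_nonneg _)) (by positivity))
    (fun n => by positivity)
    (fun n => ?_) (hasSum_koebeMajorant hα1.ne hr)).trans
    (koebe_majorant_sum_le_one hα1 h1 hpoly)
  have han := ha (n + 2) (by omega)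
  have hbn := hb (n + 2) (by omega)
  push_cast at han hbn
  rw [koebeMajorant, add_mul]
  exact add_le_add (by gcongr; exact hca n) (by gcongr)

theorem stmt_11 (α : ℝ) (hα0 : 0 ≤ α) (hα1 : α < 1) (r : ℝ) (h0 : 0 < r) (h1 : r < 1)
    (a b : ℕ → ℂ) (hb1 : b 1 = 0)
    (ha : ∀ n : ℕ, 2 ≤ n → ‖a n‖ ≤ (2 * n + 1) * (n + 1) / 6)
    (hb : ∀ n : ℕ, 2 ≤ n → ‖b n‖ ≤ (2 * n - 1) * (n - 1) / 6)
    (hpoly : 0 ≤ 2 * (1 - α) * (1 - r) ^ 4 + α * (1 - r) ^ 2 - (1 + r) ^ 2) :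
    (∑' n : ℕ, (((n + 2 : ℝ) - α) / (1 - α)) * ‖a (n + 2)‖ * r ^ (n + 1))
      + (∑' n : ℕ, (((n + 2 : ℝ) + α) / (1 - α)) * ‖b (n + 2)‖ * r ^ (n + 1)) ≤ 1 :=
  stmt_11_general α hα0 hα1 r h0 h1 a b ha hb hpoly
end

section
/- Let 0 ≤ α < 1 and 0 < r < 1. If |aₙ| ≤ (n+1)/2 and |bₙ| ≤ (n-1)/2 for all n ≥ 2 (with b₁ = 0), and (2-α)(1-r)³ + αr(1-r)² - 1 - r ≥ 0, then ∑_{n≥2} ((n-α)/(1-α))|aₙ| r^{n-1} + ∑_{n≥2} ((n+α)/(1-α))|bₙ| r^{n-1} ≤ 1. -/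
/-!
Since `(n - α)(n + 1)/2 + (n + α)(n - 1)/2 = n² - α`, the coefficient bounds dominate the left side
termwise by `∑_{n ≥ 2} (n² - α) r^{n-1} / (1 - α)`. From `∑_{n ≥ 1} n² r^{n-1} = (1 + r)/(1 - r)³`
this sum equals `((1 + r)/(1 - r)³ - α/(1 - r) - (1 - α)) / (1 - α)`, and after clearing
denominators the inequality `≤ 1` is exactly the polynomial hypothesis.
-/

section Geometric

variable {𝕜 : Type*} [NormedField 𝕜] {r : 𝕜}

theorem hasSum_add_one_sq_mul_geometric (hr : ‖r‖ < 1) :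
    HasSum (fun n : ℕ ↦ ((n : 𝕜) + 1) ^ 2 * r ^ n) ((1 + r) / (1 - r) ^ 3) := by
  have hr1 : 1 - r ≠ 0 := sub_ne_zero.2 (by rintro rfl; simp at hr)
  -- `(n + 1)² = 2 (n+2 choose 2) - (n+1 choose 1)`
  convert! ((hasSum_choose_mul_geometric_of_norm_lt_one 2 hr).mul_left 2).sub
    (hasSum_choose_mul_geometric_of_norm_lt_one 1 hr) using 1
  · funext n
    have h : (n + 2).choose 2 * 2 = (n + 2) * (n + 1) := by
      rw [← Nat.add_one_mul_choose_eq, Nat.choose_one_right]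
    have h' := congrArg (Nat.cast : ℕ → 𝕜) h
    push_cast [Nat.choose_one_right] at h' ⊢
    linear_combination (-r ^ n) * h'
  · field_simp
    ring

theorem hasSum_sq_sub_mul_geometric_shift (hr : ‖r‖ < 1) (α : 𝕜) :
    HasSum (fun n : ℕ ↦ (((n : 𝕜) + 2) ^ 2 - α) * r ^ (n + 1))
      ((1 + r) / (1 - r) ^ 3 - α / (1 - r) - (1 - α)) := by
  have h := (hasSum_add_one_sq_mul_geometric hr).sub
    ((hasSum_geometric_of_norm_lt_one hr).mul_left α)
  rw [← hasSum_nat_add_iff' 1] at h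
  convert! h using 1
  · funext n
    push_cast
    ring
  · simp [div_eq_mul_inv]

end Geometric

theorem weighted_coeff_le {n α x y : ℝ} (hα : |α| ≤ n) (hx : x ≤ (n + 1) / 2)
    (hy : y ≤ (n - 1) / 2) : (n - α) * x + (n + α) * y ≤ n ^ 2 - α := by
  obtain ⟨hα₁, hα₂⟩ := abs_le.1 hα
  calc (n - α) * x + (n + α) * y ≤ (n - α) * ((n + 1) / 2) + (n + α) * ((n - 1) / 2) := by
        gcongr; linarith
    _ = n ^ 2 - α := by ring

theorem tsum_add_tsum_le_of_hasSum_s12 {f g h : ℕ → ℝ} {s : ℝ} (hf : ∀ n, 0 ≤ f n)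
    (hg : ∀ n, 0 ≤ g n) (hfg : ∀ n, f n + g n ≤ h n) (hh : HasSum h s) :
    ∑' n, f n + ∑' n, g n ≤ s := by
  have hfs : Summable f := hh.summable.of_nonneg_of_le hf fun n ↦ by linarith [hg n, hfg n]
  have hgs : Summable g := hh.summable.of_nonneg_of_le hg fun n ↦ by linarith [hf n, hfg n]
  rw [← hfs.tsum_add hgs]
  exact hasSum_le hfg (hfs.add hgs).hasSum hh

theorem sq_sub_geometric_sum_div_le_one {α r : ℝ} (hα : α < 1) (hr : r < 1)
    (hpoly : 0 ≤ (2 - α) * (1 - r) ^ 3 + α * r * (1 - r) ^ 2 - 1 - r) :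
    ((1 + r) / (1 - r) ^ 3 - α / (1 - r) - (1 - α)) / (1 - α) ≤ 1 := by
  have hr' : 0 < 1 - r := by linarith
  rw [div_le_one (by linarith), div_sub_div _ _ (by positivity) (by positivity),
    sub_le_iff_le_add, div_le_iff₀ (by positivity)]
  nlinarith [mul_pos hr' (pow_pos hr' 3)]

theorem stmt_12_general (α : ℝ) (hα0 : 0 ≤ α) (hα1 : α < 1) (r : ℝ) (h0 : 0 < r) (h1 : r < 1)
    (a b : ℕ → ℂ)
    (ha : ∀ n : ℕ, 2 ≤ n → ‖a n‖ ≤ (n + 1) / 2)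
    (hb : ∀ n : ℕ, 2 ≤ n → ‖b n‖ ≤ (n - 1) / 2)
    (hpoly : 0 ≤ (2 - α) * (1 - r) ^ 3 + α * r * (1 - r) ^ 2 - 1 - r) :
    (∑' n : ℕ, (((n + 2 : ℝ) - α) / (1 - α)) * ‖a (n + 2)‖ * r ^ (n + 1))
      + (∑' n : ℕ, (((n + 2 : ℝ) + α) / (1 - α)) * ‖b (n + 2)‖ * r ^ (n + 1)) ≤ 1 := by
  have hα : 0 < 1 - α := by linarith
  have hr : ‖r‖ < 1 := by rwa [Real.norm_of_nonneg h0.le]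
  have hsum := (hasSum_sq_sub_mul_geometric_shift hr α).div_const (1 - α)
  refine (tsum_add_tsum_le_of_hasSum_s12 (fun n ↦ ?_) (fun n ↦ ?_) (fun n ↦ ?_) hsum).trans
    (sq_sub_geometric_sum_div_le_one hα1 h1 hpoly)
  · have : 0 ≤ (n : ℝ) + 2 - α := by linarith [n.cast_nonneg (α := ℝ)]
    exact mul_nonneg (mul_nonneg (div_nonneg this hα.le) (norm_nonneg _)) (pow_nonneg h0.le _)
  · positivity
  · have hcoeff := weighted_coeff_le (n := (n : ℝ) + 2) (α := α)
      (abs_le.2 ⟨by linarith, by linarith⟩)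
      (by exact_mod_cast ha (n + 2) le_add_self) (by exact_mod_cast hb (n + 2) le_add_self)
    calc _ = ((n + 2 - α) * ‖a (n + 2)‖ + (n + 2 + α) * ‖b (n + 2)‖) * r ^ (n + 1) / (1 - α) := by
          ring
      _ ≤ _ := by gcongr

theorem stmt_12 (α : ℝ) (hα0 : 0 ≤ α) (hα1 : α < 1) (r : ℝ) (h0 : 0 < r) (h1 : r < 1)
    (a b : ℕ → ℂ) (hb1 : b 1 = 0)
    (ha : ∀ n : ℕ, 2 ≤ n → ‖a n‖ ≤ (n + 1) / 2)
    (hb : ∀ n : ℕ, 2 ≤ n → ‖b n‖ ≤ (n - 1) / 2)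
    (hpoly : 0 ≤ (2 - α) * (1 - r) ^ 3 + α * r * (1 - r) ^ 2 - 1 - r) :
    (∑' n : ℕ, (((n + 2 : ℝ) - α) / (1 - α)) * ‖a (n + 2)‖ * r ^ (n + 1))
      + (∑' n : ℕ, (((n + 2 : ℝ) + α) / (1 - α)) * ‖b (n + 2)‖ * r ^ (n + 1)) ≤ 1 :=
  stmt_12_general α hα0 hα1 r h0 h1 a b ha hb hpoly
end

section
/- Let q(r,u) = 1 + 2u(u²-2)r + 8(1-4u²+2u⁴)r² + 2u(34-21u²+4u⁴)r³ - 2(41-24u²+8u⁴)r⁴ + 2u(34-21u²+4u⁴)r⁵ + 8(1-4u²+2u⁴)r⁶ + 2u(u²-2)r⁷ + r⁸. Then q(r,-1) = 1 + 2r - 8r² - 34r³ - 50r⁴ - 34r⁵ - 8r⁶ + 2r⁷ + r⁸, and for 0 < r < 1, q(r,-1) ≥ 0 if and only if r ≤ 2 - √3. -/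
theorem stmt_16 (q : ℝ → ℝ → ℝ)
    (hq : ∀ r u : ℝ, q r u =
      1 + 2 * u * (u ^ 2 - 2) * r + 8 * (1 - 4 * u ^ 2 + 2 * u ^ 4) * r ^ 2
        + 2 * u * (34 - 21 * u ^ 2 + 4 * u ^ 4) * r ^ 3
        - 2 * (41 - 24 * u ^ 2 + 8 * u ^ 4) * r ^ 4
        + 2 * u * (34 - 21 * u ^ 2 + 4 * u ^ 4) * r ^ 5
        + 8 * (1 - 4 * u ^ 2 + 2 * u ^ 4) * r ^ 6
        + 2 * u * (u ^ 2 - 2) * r ^ 7 + r ^ 8) :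
    (∀ r : ℝ, q r (-1) =
      1 + 2 * r - 8 * r ^ 2 - 34 * r ^ 3 - 50 * r ^ 4 - 34 * r ^ 5 - 8 * r ^ 6
        + 2 * r ^ 7 + r ^ 8) ∧
    (∀ r : ℝ, 0 < r → r < 1 → (0 ≤ q r (-1) ↔ r ≤ 2 - Real.sqrt 3)) := by
  have h1 : ∀ r : ℝ, q r (-1) =
      1 + 2 * r - 8 * r ^ 2 - 34 * r ^ 3 - 50 * r ^ 4 - 34 * r ^ 5 - 8 * r ^ 6
        + 2 * r ^ 7 + r ^ 8 := by
    intro r; rw [hq]; ring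
  refine ⟨h1, fun r hr0 hr1 => ?_⟩
  have hfac : q r (-1) = (r ^ 2 - 4 * r + 1) * (1 + r) ^ 6 := by
    rw [h1]; ring
  have hs : Real.sqrt 3 ^ 2 = 3 := Real.sq_sqrt (by norm_num)
  have hs0 : (0:ℝ) < Real.sqrt 3 := Real.sqrt_pos.mpr (by norm_num)
  have hpos : (0:ℝ) < (1 + r) ^ 6 := by positivity
  rw [hfac]
  constructor
  · intro h
    have h2 : 0 ≤ r ^ 2 - 4 * r + 1 := nonneg_of_mul_nonneg_left h hpos
    nlinarith [sq_nonneg (r - (2 - Real.sqrt 3)), sq_nonneg (2 - r - Real.sqrt 3)]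
  · intro h
    have h2 : 0 ≤ r ^ 2 - 4 * r + 1 := by nlinarith
    positivity
end

section
/- For integer n ≥ 2 and all θ ∈ ℝ, with z = e^{iθ}, Re[(z + ((n-1)/2) z̄ⁿ)/(z - ((n-1)/(2n)) z̄ⁿ)] ≥ n(3-n)/(3n-1). In particular the left side is nonnegative for all θ when n = 2 or n = 3. -/
/-!
Dividing numerator and denominator by `z = e^{iθ}` turns the quotient into `(1 + a ζ) / (1 - b ζ)`
with `ζ = z̄ⁿ / z` on the unit circle, `a = (n-1)/2` and `b = (n-1)/(2n)`. Its real part is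
`(1 - ab + (a - b) Re ζ) / |1 - bζ|²`, and after clearing denominators its excess over
`(1 - a) / (1 + b)` is `(a + b)(1 - b)(1 + Re ζ) ≥ 0`, with equality at `ζ = -1`.
For the values of `a` and `b` above, `(1 - a) / (1 + b) = n(3 - n)/(3n - 1)`.
-/

namespace Complex

theorem re_one_add_mul_div_one_sub_mul (a b : ℝ) {ζ : ℂ} (hζ : ‖ζ‖ = 1) :
    ((1 + a * ζ) / (1 - b * ζ)).re = (1 - a * b + (a - b) * ζ.re) / (1 - 2 * b * ζ.re + b ^ 2) := by
  have hre_im : ζ.re ^ 2 + ζ.im ^ 2 = 1 := by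
    have h := normSq_eq_norm_sq ζ
    rw [hζ, normSq_apply] at h
    linear_combination h
  rw [div_re, ← add_div]
  congr 1
  · simp only [add_re, sub_re, add_im, sub_im, one_re, one_im, re_ofReal_mul, im_ofReal_mul]
    linear_combination (-a * b) * hre_im
  · rw [normSq_apply]
    simp only [sub_re, sub_im, one_re, one_im, re_ofReal_mul, im_ofReal_mul]
    linear_combination b ^ 2 * hre_im

theorem div_one_add_le_re_one_add_mul_div_one_sub_mul {a b : ℝ} (hb : |b| < 1) (hab : 0 ≤ a + b)
    {ζ : ℂ} (hζ : ‖ζ‖ = 1) : (1 - a) / (1 + b) ≤ ((1 + a * ζ) / (1 - b * ζ)).re := by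
  have hc : |ζ.re| ≤ 1 := hζ ▸ abs_re_le_norm ζ
  have hbc : b * ζ.re ≤ |b| :=
    (le_abs_self _).trans (abs_mul b ζ.re ▸ mul_le_of_le_one_right (abs_nonneg b) hc)
  have hden : 0 < 1 - 2 * b * ζ.re + b ^ 2 := by
    nlinarith [sq_abs b, pow_pos (sub_pos.mpr hb) 2]
  have hb_pos : 0 < 1 + b := by linarith [(abs_lt.mp hb).1]
  have hexcess : 0 ≤ (a + b) * (1 - b) * (1 + ζ.re) :=
    mul_nonneg (mul_nonneg hab (sub_nonneg.mpr (le_of_abs_le hb.le)))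
      (by linarith [(abs_le.mp hc).1])
  rw [re_one_add_mul_div_one_sub_mul a b hζ, div_le_div_iff₀ hb_pos hden]
  linear_combination hexcess

theorem div_one_add_le_re_add_mul_div_sub_mul {a b : ℝ} (hb : |b| < 1) (hab : 0 ≤ a + b)
    {z w : ℂ} (hz : z ≠ 0) (hw : ‖w‖ = ‖z‖) :
    (1 - a) / (1 + b) ≤ ((z + a * w) / (z - b * w)).re := by
  have hquot : (z + a * w) / (z - b * w) = (1 + a * (w / z)) / (1 - b * (w / z)) := by
    rw [← mul_div_mul_right _ _ (inv_ne_zero hz)]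
    congr 1 <;> field_simp
  rw [hquot]
  exact div_one_add_le_re_one_add_mul_div_one_sub_mul hb hab
    (by rw [norm_div, hw, div_self (norm_ne_zero_iff.mpr hz)])

end Complex

theorem stmt_18 (n : ℕ) (hn : 2 ≤ n) (θ : ℝ) :
    ((Complex.exp (Complex.I * θ)
          + (((n : ℂ) - 1) / 2) * ((starRingEnd ℂ) (Complex.exp (Complex.I * θ))) ^ n) /
        (Complex.exp (Complex.I * θ)
          - (((n : ℂ) - 1) / (2 * n)) * ((starRingEnd ℂ) (Complex.exp (Complex.I * θ))) ^ n)).re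
      ≥ (n : ℝ) * (3 - n) / (3 * n - 1) ∧
    ((n = 2 ∨ n = 3) →
      0 ≤ ((Complex.exp (Complex.I * θ)
          + (((n : ℂ) - 1) / 2) * ((starRingEnd ℂ) (Complex.exp (Complex.I * θ))) ^ n) /
        (Complex.exp (Complex.I * θ)
          - (((n : ℂ) - 1) / (2 * n)) * ((starRingEnd ℂ) (Complex.exp (Complex.I * θ))) ^ n)).re) := by
  have hN : (2 : ℝ) ≤ n := by exact_mod_cast hn
  have hz : ‖Complex.exp (Complex.I * θ)‖ = 1 := Complex.norm_exp_I_mul_ofReal θ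
  have hb : |((n : ℝ) - 1) / (2 * n)| < 1 := by
    rw [abs_of_nonneg (div_nonneg (by linarith) (by linarith)), div_lt_one (by linarith)]
    linarith
  have hab : 0 ≤ ((n : ℝ) - 1) / 2 + ((n : ℝ) - 1) / (2 * n) :=
    add_nonneg (div_nonneg (by linarith) (by linarith)) (div_nonneg (by linarith) (by linarith))
  have hbound := Complex.div_one_add_le_re_add_mul_div_sub_mul hb hab
    (z := Complex.exp (Complex.I * θ)) (w := (starRingEnd ℂ) (Complex.exp (Complex.I * θ)) ^ n)
    (Complex.exp_ne_zero _) (by rw [norm_pow, Complex.norm_conj, hz, one_pow])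
  have hvalue : (1 - ((n : ℝ) - 1) / 2) / (1 + ((n : ℝ) - 1) / (2 * n)) = n * (3 - n) / (3 * n - 1) := by
    field_simp
    ring
  push_cast at hbound
  rw [hvalue] at hbound
  refine ⟨hbound, ?_⟩
  rintro (rfl | rfl) <;> exact le_trans (by norm_num) hbound
end
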